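/- Let P and Q be probability measures on Ω₁×⋯×Ω_n (standard Borel spaces) that are both Bayes-nets with respect to a common DAG G with topological ordering (1,…,n) and parent sets Π_i ⊆ {1,…,i−1}. Then the Total Variation distance satisfies TV(P,Q) ≤ 2·Σ_{i=1}^n TV(P_{X_i∪X_{Π_i}}, Q_{X_i∪X_{Π_i}}). -/

import Mathlib

open MeasureTheory ProbabilityTheory Filter
open scoped ENNReal NNReal

noncomputable section

universe u

/-- Projection of a point of a product space onto the coordinates in `S`. -/
def proj {n : ℕ} {Ω : Fin n → Type*} (S : Finset (Fin n)) (x : ∀ i, Ω i) (i : S) : Ω i := x i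

lemma measurable_proj {n : ℕ} {Ω : Fin n → Type*} [∀ i, MeasurableSpace (Ω i)]
    (S : Finset (Fin n)) : Measurable (proj (Ω := Ω) S) :=
  measurable_pi_lambda _ fun _ => measurable_pi_apply _

/-- A finite measure `P` on a product of standard Borel spaces is a Bayes-net with respect to
the parent structure `par` (for the topological ordering `0 < 1 < ⋯ < n-1`) if, for every `i`,
the `i`-th coordinate is conditionally independent of the tuple of previous coordinates given
the tuple of parent coordinates `par i`. -/
def IsBayesNet {n : ℕ} {Ω : Fin n → Type*} [∀ i, MeasurableSpace (Ω i)]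
    [∀ i, StandardBorelSpace (Ω i)] [∀ i, Nonempty (Ω i)]
    (P : Measure (∀ i, Ω i)) [IsFiniteMeasure P] (par : Fin n → Finset (Fin n)) : Prop :=
  ∀ i : Fin n,
    CondIndepFun (MeasurableSpace.comap (proj (par i)) inferInstance)
      ((measurable_proj (par i)).comap_le) (fun x => x i) (proj (Finset.Iio i)) P

/-- The total variation distance `TV(P,Q) = sup_A |P(A) - Q(A)|`, the supremum running over
measurable sets `A`. -/
def tvDist {Ω : Type*} [MeasurableSpace Ω] (P Q : Measure Ω) : ℝ :=
  ⨆ A : {A : Set Ω // MeasurableSet A}, |(P A.1).toReal - (Q A.1).toReal|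

/-!
Add the coordinates one at a time along the topological order. At step `i` put `Z = X_{Π_i}`,
`V = X_{<i}` and `Y = X_i`. The Bayes-net property says that the law of `((Z, V), Y)` is
`P_{Z,V} ⊗ κ_P(Z)`, where `κ_P` is the conditional law of `Y` given `Z`, and likewise for `Q`.
Exchanging first the kernel and then the base measure,
`TV(P_{Z,V} ⊗ κ_P, Q_{Z,V} ⊗ κ_Q) ≤ TV(P_{Z,V} ⊗ κ_P, P_{Z,V} ⊗ κ_Q) + TV(P_{Z,V}, Q_{Z,V})`.
The kernels only read `Z`, and the Hahn sets of `κ_P(z)` and `κ_Q(z)` can be chosen jointly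
measurable in `z`, so the first term is at most
`TV(P_Z ⊗ κ_P, P_Z ⊗ κ_Q) ≤ TV(P_{Z,Y}, Q_{Z,Y}) + TV(Q_Z, P_Z) ≤ 2 TV(P_{Z,Y}, Q_{Z,Y})`.
Hence each new coordinate costs at most `2 TV(P_{X_i ∪ X_{Π_i}}, Q_{X_i ∪ X_{Π_i}})`.
-/

section TotalVariation

variable {α β γ : Type*} [MeasurableSpace α] [MeasurableSpace β] [MeasurableSpace γ]

instance : Nonempty {A : Set α // MeasurableSet A} := ⟨⟨∅, .empty⟩⟩

lemma tvDist_bddAbove (P Q : Measure α) [IsFiniteMeasure P] [IsFiniteMeasure Q] :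
    BddAbove (Set.range fun A : {A : Set α // MeasurableSet A} =>
      |(P A.1).toReal - (Q A.1).toReal|) := by
  refine ⟨P.real .univ + Q.real .univ, ?_⟩
  rintro _ ⟨⟨A, -⟩, rfl⟩
  show |P.real A - Q.real A| ≤ _
  have hP : P.real A ≤ P.real .univ := measureReal_mono (Set.subset_univ A)
  have hQ : Q.real A ≤ Q.real .univ := measureReal_mono (Set.subset_univ A)
  rw [abs_sub_le_iff]
  constructor <;> linarith [measureReal_nonneg (μ := P) (s := A),
    measureReal_nonneg (μ := Q) (s := A)]

lemma abs_sub_le_tvDist (P Q : Measure α) [IsFiniteMeasure P] [IsFiniteMeasure Q]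
    {A : Set α} (hA : MeasurableSet A) : |(P A).toReal - (Q A).toReal| ≤ tvDist P Q :=
  le_ciSup (tvDist_bddAbove P Q) ⟨A, hA⟩

lemma sub_le_tvDist (P Q : Measure α) [IsFiniteMeasure P] [IsFiniteMeasure Q]
    {A : Set α} (hA : MeasurableSet A) : (P A).toReal - (Q A).toReal ≤ tvDist P Q :=
  (le_abs_self _).trans (abs_sub_le_tvDist P Q hA)

lemma tvDist_le_of_forall_sub_le {P Q : Measure α} {c : ℝ}
    (hPQ : ∀ A, MeasurableSet A → (P A).toReal - (Q A).toReal ≤ c)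
    (hQP : ∀ A, MeasurableSet A → (Q A).toReal - (P A).toReal ≤ c) : tvDist P Q ≤ c :=
  ciSup_le fun A => abs_sub_le_iff.2 ⟨hPQ A.1 A.2, hQP A.1 A.2⟩

lemma tvDist_comm (P Q : Measure α) : tvDist P Q = tvDist Q P := by
  simp_rw [tvDist, abs_sub_comm]

lemma tvDist_triangle (P Q R : Measure α) [IsFiniteMeasure P] [IsFiniteMeasure Q]
    [IsFiniteMeasure R] : tvDist P R ≤ tvDist P Q + tvDist Q R :=
  ciSup_le fun A => (abs_sub_le _ _ _).trans
    (add_le_add (abs_sub_le_tvDist P Q A.2) (abs_sub_le_tvDist Q R A.2))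

lemma tvDist_eq_zero_of_subsingleton [Subsingleton α] (P Q : Measure α) [IsProbabilityMeasure P]
    [IsProbabilityMeasure Q] : tvDist P Q = 0 := by
  refine le_antisymm (ciSup_le fun A => ?_) ((abs_nonneg _).trans (abs_sub_le_tvDist P Q .empty))
  induction A.1 using Subsingleton.set_cases <;> simp

lemma tvDist_map_le_of_measurable_comap (P Q : Measure α) [IsFiniteMeasure P]
    [IsFiniteMeasure Q] {X : α → β} {X' : α → γ} (hX : Measurable X)
    (hX' : Measurable[MeasurableSpace.comap X inferInstance] X') :
    tvDist (P.map X') (Q.map X') ≤ tvDist (P.map X) (Q.map X) := by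
  refine ciSup_le fun ⟨A, hA⟩ => ?_
  obtain ⟨B, hB, hBA⟩ := hX' hA
  have hX'_meas : Measurable X' := hX'.mono hX.comap_le le_rfl
  rw [Measure.map_apply hX'_meas hA, Measure.map_apply hX'_meas hA, ← hBA]
  simpa only [Measure.map_apply hX hB] using abs_sub_le_tvDist (P.map X) (Q.map X) hB

lemma tvDist_map_le (P Q : Measure α) [IsFiniteMeasure P] [IsFiniteMeasure Q] {f : α → β}
    (hf : Measurable f) : tvDist (P.map f) (Q.map f) ≤ tvDist P Q := by
  simpa only [Measure.map_id] using tvDist_map_le_of_measurable_comap P Q measurable_id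
    (by rwa [MeasurableSpace.comap_id])

end TotalVariation

lemma ENNReal.toReal_sub_le_toReal_sub_of_add_le {a b c d : ℝ≥0∞} (ha : a ≠ ∞) (hb : b ≠ ∞)
    (hc : c ≠ ∞) (hd : d ≠ ∞) (h : a + b ≤ c + d) :
    a.toReal - d.toReal ≤ c.toReal - b.toReal := by
  have := ENNReal.toReal_mono (ENNReal.add_ne_top.2 ⟨hc, hd⟩) h
  rw [ENNReal.toReal_add ha hb, ENNReal.toReal_add hc hd] at this
  linarith

namespace MeasureTheory

variable {α : Type*} [MeasurableSpace α] {μ ν : Measure α} {s : Set α}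

lemma IsHahnDecomposition.lintegral_add_le [IsFiniteMeasure μ] [IsFiniteMeasure ν]
    (h : IsHahnDecomposition μ ν s) {f : α → ℝ≥0∞} (hf : Measurable f) (hf1 : ∀ x, f x ≤ 1) :
    ∫⁻ x, f x ∂ν + μ s ≤ ν s + ∫⁻ x, f x ∂μ := by
  have hs := h.measurableSet
  have split (ρ : Measure α) : ∫⁻ x in s, f x ∂ρ + ∫⁻ x in s, (1 - f x) ∂ρ = ρ s := by
    simp [← lintegral_add_left hf, add_tsub_cancel_of_le (hf1 _)]
  have on_s : ∫⁻ x in s, (1 - f x) ∂μ ≤ ∫⁻ x in s, (1 - f x) ∂ν :=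
    lintegral_mono' h.le_on le_rfl
  have on_sc : ∫⁻ x in sᶜ, f x ∂ν ≤ ∫⁻ x in sᶜ, f x ∂μ := lintegral_mono' h.ge_on_compl le_rfl
  rw [← lintegral_add_compl (μ := μ) f hs, ← lintegral_add_compl (μ := ν) f hs, ← split μ,
    ← split ν]
  calc _ ≤ ∫⁻ x in s, f x ∂ν + ∫⁻ x in sᶜ, f x ∂μ
        + (∫⁻ x in s, f x ∂μ + ∫⁻ x in s, (1 - f x) ∂ν) := by gcongr
    _ = _ := by ring

lemma IsHahnDecomposition.measure_add_le [IsFiniteMeasure μ] [IsFiniteMeasure ν]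
    (h : IsHahnDecomposition μ ν s) {B : Set α} (hB : MeasurableSet B) :
    ν B + μ s ≤ ν s + μ B := by
  have := h.lintegral_add_le (measurable_const.indicator hB) fun x =>
    Set.indicator_le_self' (fun _ _ => zero_le_one) x (f := fun _ => (1 : ℝ≥0∞))
  simpa only [lintegral_indicator_const hB, one_mul] using this

lemma isHahnDecomposition_withDensity (ρ : Measure α) {f g : α → ℝ≥0∞}
    (hs : MeasurableSet s) (hfg : ∀ x ∈ s, f x ≤ g x) (hgf : ∀ x ∈ sᶜ, g x ≤ f x) :
    IsHahnDecomposition (ρ.withDensity f) (ρ.withDensity g) s where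
  measurableSet := hs
  le_on := by
    simpa only [restrict_withDensity hs] using withDensity_mono (ae_restrict_of_forall_mem hs hfg)
  ge_on_compl := by
    simpa only [restrict_withDensity hs.compl] using
      withDensity_mono (ae_restrict_of_forall_mem hs.compl hgf)

end MeasureTheory

lemma ProbabilityTheory.Kernel.exists_measurableSet_isHahnDecomposition {γ β : Type*}
    [MeasurableSpace γ] [MeasurableSpace β] [MeasurableSpace.CountablyGenerated β]
    (κ η : Kernel γ β) [IsFiniteKernel κ] [IsFiniteKernel η] :
    ∃ E : Set (γ × β), MeasurableSet E ∧
      ∀ c, IsHahnDecomposition (η c) (κ c) (Prod.mk c ⁻¹' E) := by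
  -- `g` is a jointly measurable density of `κ` with respect to `κ + η`, and `1 - g` one of `η`.
  set g := rnDerivAux κ (κ + η)
  have hg : Measurable fun p : γ × β => g p.1 p.2 := measurable_rnDerivAux _ _
  refine ⟨{p | 1 / 2 ≤ g p.1 p.2}, hg measurableSet_Ici, fun c => ?_⟩
  have hκ : κ c = ((κ + η) c).withDensity fun x => ENNReal.ofReal (g c x) := by
    conv_lhs => rw [← withDensity_rnDerivAux κ η]
    rw [Kernel.withDensity_apply _ (by fun_prop)]
    simp_rw [ENNReal.ofNNReal_toNNReal]
    rfl
  have hη : η c = ((κ + η) c).withDensity fun x => ENNReal.ofReal (1 - g c x) := by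
    conv_lhs => rw [← withDensity_one_sub_rnDerivAux κ η]
    rw [Kernel.withDensity_apply _ (by fun_prop)]
    simp_rw [ENNReal.ofNNReal_toNNReal]
    rfl
  rw [hκ, hη]
  refine isHahnDecomposition_withDensity _ (measurable_prodMk_left (hg measurableSet_Ici))
    (fun x hx => ENNReal.ofReal_le_ofReal ?_) (fun x hx => ENNReal.ofReal_le_ofReal ?_)
  · have : 1 / 2 ≤ g c x := hx
    linarith
  · have : ¬ 1 / 2 ≤ g c x := hx
    linarith

section CompProd

variable {α β γ : Type*} [MeasurableSpace α] [MeasurableSpace β] [MeasurableSpace γ]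

lemma toReal_lintegral_sub_le_tvDist (P Q : Measure α) [IsFiniteMeasure P] [IsFiniteMeasure Q]
    {f : α → ℝ≥0∞} (hf : Measurable f) (hf1 : ∀ x, f x ≤ 1) :
    (∫⁻ x, f x ∂P).toReal - (∫⁻ x, f x ∂Q).toReal ≤ tvDist P Q := by
  obtain ⟨s, hs⟩ := exists_isHahnDecomposition Q P
  have hfin (ρ : Measure α) [IsFiniteMeasure ρ] : ∫⁻ x, f x ∂ρ ≠ ∞ :=
    ne_top_of_le_ne_top (measure_ne_top ρ .univ) (by simpa using lintegral_mono hf1)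
  exact (ENNReal.toReal_sub_le_toReal_sub_of_add_le (hfin P) (measure_ne_top _ _)
    (measure_ne_top _ _) (hfin Q) (hs.lintegral_add_le hf hf1)).trans
    (sub_le_tvDist P Q hs.measurableSet)

lemma measure_compProd_sub_le_tvDist (μ ν : Measure α) [IsFiniteMeasure μ] [IsFiniteMeasure ν]
    (κ : Kernel α β) [IsMarkovKernel κ] {A : Set (α × β)} (hA : MeasurableSet A) :
    ((μ ⊗ₘ κ) A).toReal - ((ν ⊗ₘ κ) A).toReal ≤ tvDist μ ν := by
  rw [Measure.compProd_apply hA, Measure.compProd_apply hA]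
  exact toReal_lintegral_sub_le_tvDist μ ν (Kernel.measurable_kernel_prodMk_left hA)
    fun _ => prob_le_one

lemma tvDist_compProd_le (μ ν : Measure α) [IsFiniteMeasure μ] [IsFiniteMeasure ν]
    (κ : Kernel α β) [IsMarkovKernel κ] : tvDist (μ ⊗ₘ κ) (ν ⊗ₘ κ) ≤ tvDist μ ν :=
  tvDist_le_of_forall_sub_le (fun _ hA => measure_compProd_sub_le_tvDist μ ν κ hA)
    (fun _ hA => tvDist_comm μ ν ▸ measure_compProd_sub_le_tvDist ν μ κ hA)

variable [MeasurableSpace.CountablyGenerated β]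

lemma measure_compProd_comap_sub_le_tvDist (μ : Measure α) [IsFiniteMeasure μ] {f : α → γ}
    (hf : Measurable f) (κ η : Kernel γ β) [IsMarkovKernel κ] [IsMarkovKernel η]
    {A : Set (α × β)} (hA : MeasurableSet A) :
    ((μ ⊗ₘ κ.comap f hf) A).toReal - ((μ ⊗ₘ η.comap f hf) A).toReal
      ≤ tvDist (μ.map f ⊗ₘ κ) (μ.map f ⊗ₘ η) := by
  obtain ⟨E, hE, hHahn⟩ := κ.exists_measurableSet_isHahnDecomposition η
  have hE_apply (ξ : Kernel γ β) [IsMarkovKernel ξ] :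
      (μ.map f ⊗ₘ ξ) E = ∫⁻ a, ξ (f a) (Prod.mk (f a) ⁻¹' E) ∂μ := by
    rw [Measure.compProd_apply hE, lintegral_map (Kernel.measurable_kernel_prodMk_left hE) hf]
  have hA_le_E : (μ ⊗ₘ κ.comap f hf) A + (μ.map f ⊗ₘ η) E
      ≤ (μ.map f ⊗ₘ κ) E + (μ ⊗ₘ η.comap f hf) A := by
    rw [Measure.compProd_apply hA, Measure.compProd_apply hA, hE_apply, hE_apply,
      ← lintegral_add_left (Kernel.measurable_kernel_prodMk_left hA),
      ← lintegral_add_left (f := fun a => κ (f a) (Prod.mk (f a) ⁻¹' E))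
        ((Kernel.measurable_kernel_prodMk_left hE).comp hf)]
    exact lintegral_mono fun a => (hHahn (f a)).measure_add_le (measurable_prodMk_left hA)
  exact (ENNReal.toReal_sub_le_toReal_sub_of_add_le (measure_ne_top _ _) (measure_ne_top _ _)
    (measure_ne_top _ _) (measure_ne_top _ _) hA_le_E).trans (sub_le_tvDist _ _ hE)

lemma tvDist_compProd_comap_le (μ : Measure α) [IsFiniteMeasure μ] {f : α → γ}
    (hf : Measurable f) (κ η : Kernel γ β) [IsMarkovKernel κ] [IsMarkovKernel η] :
    tvDist (μ ⊗ₘ κ.comap f hf) (μ ⊗ₘ η.comap f hf) ≤ tvDist (μ.map f ⊗ₘ κ) (μ.map f ⊗ₘ η) :=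
  tvDist_le_of_forall_sub_le (fun _ hA => measure_compProd_comap_sub_le_tvDist μ hf κ η hA)
    (fun _ hA => tvDist_comm (μ.map f ⊗ₘ κ) _ ▸
      measure_compProd_comap_sub_le_tvDist μ hf η κ hA)

lemma tvDist_compProd_prodMkRight_le (μ ν : Measure (γ × α)) [IsFiniteMeasure μ]
    [IsFiniteMeasure ν] (κ η : Kernel γ β) [IsMarkovKernel κ] [IsMarkovKernel η] :
    tvDist (μ ⊗ₘ κ.prodMkRight α) (ν ⊗ₘ η.prodMkRight α)
      ≤ tvDist μ ν + 2 * tvDist (μ.fst ⊗ₘ κ) (ν.fst ⊗ₘ η) := by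
  have marginal : tvDist ν.fst μ.fst ≤ tvDist (μ.fst ⊗ₘ κ) (ν.fst ⊗ₘ η) := by
    have := tvDist_map_le (μ.fst ⊗ₘ κ) (ν.fst ⊗ₘ η) measurable_fst
    rwa [← Measure.fst.eq_1, ← Measure.fst.eq_1, Measure.fst_compProd, Measure.fst_compProd,
      tvDist_comm] at this
  calc tvDist (μ ⊗ₘ κ.prodMkRight α) (ν ⊗ₘ η.prodMkRight α)
      ≤ tvDist (μ ⊗ₘ κ.prodMkRight α) (μ ⊗ₘ η.prodMkRight α)
        + tvDist (μ ⊗ₘ η.prodMkRight α) (ν ⊗ₘ η.prodMkRight α) := tvDist_triangle _ _ _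
    _ ≤ tvDist (μ.fst ⊗ₘ κ) (μ.fst ⊗ₘ η) + tvDist μ ν :=
        add_le_add (tvDist_compProd_comap_le μ measurable_fst κ η) (tvDist_compProd_le μ ν _)
    _ ≤ tvDist (μ.fst ⊗ₘ κ) (ν.fst ⊗ₘ η) + tvDist (ν.fst ⊗ₘ η) (μ.fst ⊗ₘ η)
        + tvDist μ ν := by
        gcongr
        exact tvDist_triangle _ _ _
    _ ≤ tvDist (μ.fst ⊗ₘ κ) (ν.fst ⊗ₘ η) + tvDist ν.fst μ.fst + tvDist μ ν := by
        gcongr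
        exact tvDist_compProd_le _ _ _
    _ ≤ tvDist μ ν + 2 * tvDist (μ.fst ⊗ₘ κ) (ν.fst ⊗ₘ η) := by linarith

end CompProd

section ConditionalIndependence

variable {Ω γ U E : Type*} [MeasurableSpace Ω] [StandardBorelSpace Ω] [MeasurableSpace γ]
  [MeasurableSpace U] [StandardBorelSpace U] [Nonempty U]
  [MeasurableSpace E] [StandardBorelSpace E] [Nonempty E]
  {Z : Ω → γ} {V : Ω → U} {Y : Ω → E}

lemma map_prod_eq_compProd_prodMkRight_of_condIndepFun {μ : Measure Ω} [IsFiniteMeasure μ]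
    (hZ : Measurable Z) (hV : Measurable V) (hY : Measurable Y) (h : Y ⟂ᵢ[Z, hZ; μ] V) :
    μ.map (fun ω => ((Z ω, V ω), Y ω))
      = μ.map (fun ω => (Z ω, V ω)) ⊗ₘ (condDistrib Y Z μ).prodMkRight U :=
  (condDistrib_ae_eq_iff_measure_eq_compProd _ hY.aemeasurable _).1
    ((condIndepFun_iff_condDistrib_prod_ae_eq_prodMkRight hY hV hZ).1 h.symm)

theorem tvDist_map_prod_le_of_condIndepFun {μ ν : Measure Ω} [IsFiniteMeasure μ]
    [IsFiniteMeasure ν] (hZ : Measurable Z) (hV : Measurable V) (hY : Measurable Y)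
    (hμ : Y ⟂ᵢ[Z, hZ; μ] V) (hν : Y ⟂ᵢ[Z, hZ; ν] V) :
    tvDist (μ.map fun ω => ((Z ω, V ω), Y ω)) (ν.map fun ω => ((Z ω, V ω), Y ω))
      ≤ tvDist (μ.map fun ω => (Z ω, V ω)) (ν.map fun ω => (Z ω, V ω))
        + 2 * tvDist (μ.map fun ω => (Z ω, Y ω)) (ν.map fun ω => (Z ω, Y ω)) := by
  rw [map_prod_eq_compProd_prodMkRight_of_condIndepFun hZ hV hY hμ,
    map_prod_eq_compProd_prodMkRight_of_condIndepFun hZ hV hY hν,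
    ← compProd_map_condDistrib (μ := μ) (X := Z) hY.aemeasurable,
    ← compProd_map_condDistrib (μ := ν) (X := Z) hY.aemeasurable]
  simpa only [Measure.fst_map_prodMk hV] using tvDist_compProd_prodMkRight_le
    (μ.map fun ω => (Z ω, V ω)) (ν.map fun ω => (Z ω, V ω)) (condDistrib Y Z μ) (condDistrib Y Z ν)

end ConditionalIndependence

section BayesNet

variable {n : ℕ} {Ω : Fin n → Type*} [∀ i, MeasurableSpace (Ω i)]

lemma measurable_comap_proj_apply {T : Finset (Fin n)} {j : Fin n} (hj : j ∈ T) :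
    Measurable[MeasurableSpace.comap (proj T) inferInstance] fun x : (∀ i, Ω i) => x j :=
  (measurable_pi_apply (⟨j, hj⟩ : T)).comp (comap_measurable (proj T))

lemma measurable_proj_of_forall {m : MeasurableSpace (∀ i, Ω i)} {T : Finset (Fin n)}
    (h : ∀ j ∈ T, Measurable[m] fun x : (∀ i, Ω i) => x j) : Measurable[m] (proj (Ω := Ω) T) :=
  measurable_pi_lambda _ fun j => h j j.2

variable [∀ i, StandardBorelSpace (Ω i)] [∀ i, Nonempty (Ω i)] {par : Fin n → Finset (Fin n)}

theorem tvDist_map_proj_insert_Iio_le {i : Fin n} (hpar : par i ⊆ Finset.Iio i)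
    (P Q : Measure (∀ i, Ω i)) [IsFiniteMeasure P] [IsFiniteMeasure Q]
    (hP : IsBayesNet P par) (hQ : IsBayesNet Q par) :
    tvDist (P.map (proj (insert i (Finset.Iio i)))) (Q.map (proj (insert i (Finset.Iio i))))
      ≤ tvDist (P.map (proj (Finset.Iio i))) (Q.map (proj (Finset.Iio i)))
        + 2 * tvDist (P.map (proj (insert i (par i)))) (Q.map (proj (insert i (par i)))) := by
  set Z := proj (Ω := Ω) (par i)
  set V := proj (Ω := Ω) (Finset.Iio i)
  have hZ : Measurable Z := measurable_proj _
  have hV : Measurable V := measurable_proj _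
  have hY : Measurable fun x : (∀ j, Ω j) => x i := measurable_pi_apply i
  calc _ ≤ tvDist (P.map fun x => ((Z x, V x), x i)) (Q.map fun x => ((Z x, V x), x i)) := by
        refine tvDist_map_le_of_measurable_comap P Q ((hZ.prodMk hV).prodMk hY)
          (measurable_proj_of_forall fun j hj => ?_)
        rcases Finset.mem_insert.1 hj with rfl | hj
        · exact measurable_snd.comp (comap_measurable _)
        · exact ((measurable_pi_apply (X := fun j : Finset.Iio i => Ω j) ⟨j, hj⟩).comp
            (measurable_snd.comp measurable_fst)).comp (comap_measurable _)
    _ ≤ tvDist (P.map fun x => (Z x, V x)) (Q.map fun x => (Z x, V x))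
        + 2 * tvDist (P.map fun x => (Z x, x i)) (Q.map fun x => (Z x, x i)) :=
        tvDist_map_prod_le_of_condIndepFun hZ hV hY (hP i) (hQ i)
    _ ≤ _ := by
        gcongr
        · exact tvDist_map_le_of_measurable_comap P Q hV
            ((measurable_proj_of_forall fun j hj => measurable_comap_proj_apply (hpar hj)).prodMk
              (comap_measurable _))
        · exact tvDist_map_le_of_measurable_comap P Q (measurable_proj _)
            ((measurable_proj_of_forall fun j hj =>
              measurable_comap_proj_apply (Finset.mem_insert_of_mem hj)).prodMk
              (measurable_comap_proj_apply (Finset.mem_insert_self i _)))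

theorem tvDist_map_proj_le_of_isLowerSet (hpar : ∀ i, par i ⊆ Finset.Iio i)
    (P Q : Measure (∀ i, Ω i)) [IsProbabilityMeasure P] [IsProbabilityMeasure Q]
    (hP : IsBayesNet P par) (hQ : IsBayesNet Q par) {s : Finset (Fin n)}
    (hs : IsLowerSet (s : Set (Fin n))) :
    tvDist (P.map (proj s)) (Q.map (proj s)) ≤
      2 * ∑ i ∈ s, tvDist (P.map (proj (insert i (par i)))) (Q.map (proj (insert i (par i)))) := by
  induction s using Finset.induction_on_max with
  | empty =>
    have := Measure.isProbabilityMeasure_map (measurable_proj (Ω := Ω) ∅).aemeasurable (μ := P)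
    have := Measure.isProbabilityMeasure_map (measurable_proj (Ω := Ω) ∅).aemeasurable (μ := Q)
    simp [tvDist_eq_zero_of_subsingleton]
  | insert a s ha ih =>
    have ha_notMem : a ∉ s := fun h => lt_irrefl a (ha a h)
    have mem_of_lt {x : Fin n} (hx : x < a) : x ∈ s :=
      (Finset.mem_insert.1 (hs hx.le (Finset.mem_insert_self a s))).resolve_left hx.ne
    have hs_lower : IsLowerSet (s : Set (Fin n)) := fun x y hyx hx =>
      mem_of_lt (hyx.trans_lt (ha x hx))
    have hs_Iio : s = Finset.Iio a := by
      ext x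
      exact ⟨fun hx => Finset.mem_Iio.2 (ha x hx), fun hx => mem_of_lt (Finset.mem_Iio.1 hx)⟩
    have step := tvDist_map_proj_insert_Iio_le (hpar a) P Q hP hQ
    rw [← hs_Iio] at step
    rw [Finset.sum_insert ha_notMem]
    linarith [ih hs_lower]

end BayesNet

/-- `2`-linear subadditivity of the total variation distance on Bayes-nets. -/
theorem tvDist_linear_subadditivity_bayes_net
    {n : ℕ} (Ω : Fin n → Type u) [∀ i, MeasurableSpace (Ω i)]
    [∀ i, StandardBorelSpace (Ω i)] [∀ i, Nonempty (Ω i)]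
    (par : Fin n → Finset (Fin n)) (hpar : ∀ i, par i ⊆ Finset.Iio i)
    (P Q : Measure (∀ i, Ω i)) [IsProbabilityMeasure P] [IsProbabilityMeasure Q]
    (hP : IsBayesNet P par) (hQ : IsBayesNet Q par) :
    tvDist P Q ≤ 2 * ∑ i : Fin n,
      tvDist (P.map (proj (insert i (par i)))) (Q.map (proj (insert i (par i)))) := by
  calc tvDist P Q = tvDist (P.map id) (Q.map id) := by rw [Measure.map_id, Measure.map_id]
    _ ≤ tvDist (P.map (proj Finset.univ)) (Q.map (proj Finset.univ)) :=
        tvDist_map_le_of_measurable_comap P Q (measurable_proj _)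
          (@measurable_pi_lambda _ _ _ (MeasurableSpace.comap (proj Finset.univ) inferInstance) _
            id fun j => measurable_comap_proj_apply (Finset.mem_univ j))
    _ ≤ _ := tvDist_map_proj_le_of_isLowerSet hpar P Q hP hQ (by simpa using isLowerSet_univ)
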